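/- arXiv:1910.02843 — 3 statements merged into one kernel-verified Lean document; each statement's English description precedes it below -/
import Mathlib

section
/- Let T : H → K be a bounded injective linear operator with closed range between real Hilbert spaces, and let G : K → K be firmly nonexpansive with respect to the norm of K. Then the operator T† G T : H → H is firmly nonexpansive with respect to the inner product ⟨x, y⟩_T := ⟨Tx, Ty⟩_K on H, i.e., ‖T†GTx − T†GTy‖_T² ≤ ⟨x − y, T†GTx − T†GTy⟩_T for all x, y ∈ H. -/
/-!
With `P = T T†`, hypothesis `hproj` says that `z - P z` is orthogonal to the range of `T`, which
contains both `P z` and `T x - T y`. So for `d = G (T x) - G (T y)` the projection `P d` is no longer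
than `d`, while pairing with `T x - T y` does not see the difference `d - P d`; the firm
nonexpansiveness of `G` at `T x, T y` therefore passes to `P d`.
-/

open scoped RealInnerProductSpace

section

variable {E : Type*} [NormedAddCommGroup E] [InnerProductSpace ℝ E]

theorem norm_sq_le_of_inner_sub_self_eq_zero {z p : E} (h : ⟪z - p, p⟫ = 0) :
    ‖p‖ ^ 2 ≤ ‖z‖ ^ 2 := by
  have hpyth := norm_add_sq_eq_norm_sq_add_norm_sq_real h
  rw [sub_add_cancel] at hpyth
  nlinarith [mul_self_nonneg ‖z - p‖]

theorem norm_sq_le_inner_of_inner_sub_eq_zero {w d p : E} (hd : ‖d‖ ^ 2 ≤ ⟪w, d⟫)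
    (hp : ⟪d - p, p⟫ = 0) (hw : ⟪d - p, w⟫ = 0) : ‖p‖ ^ 2 ≤ ⟪w, p⟫ :=
  calc ‖p‖ ^ 2 ≤ ‖d‖ ^ 2 := norm_sq_le_of_inner_sub_self_eq_zero hp
    _ ≤ ⟪w, d⟫ := hd
    _ = ⟪w, p⟫ := by
      rw [real_inner_comm, inner_sub_right, sub_eq_zero] at hw
      exact hw

end

theorem stmt1_general
    {H K : Type*} [NormedAddCommGroup H] [InnerProductSpace ℝ H]
    [NormedAddCommGroup K] [InnerProductSpace ℝ K]
    (T : H →L[ℝ] K)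
    (Tdag : K →L[ℝ] H)
    (hproj : ∀ z : K, ∀ x : H, ⟪z - T (Tdag z), T x⟫ = 0)
    (G : K → K)
    (hG : ∀ u v : K, ‖G u - G v‖ ^ 2 ≤ ⟪u - v, G u - G v⟫) :
    ∀ x y : H,
      ‖T (Tdag (G (T x))) - T (Tdag (G (T y)))‖ ^ 2
        ≤ ⟪T x - T y, T (Tdag (G (T x))) - T (Tdag (G (T y)))⟫ := by
  intro x y
  rw [← map_sub T (Tdag _), ← map_sub Tdag]
  refine norm_sq_le_inner_of_inner_sub_eq_zero (hG (T x) (T y)) (hproj _ _) ?_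
  simpa only [map_sub] using hproj (G (T x) - G (T y)) (x - y)

/-- If `T : H → K` is bounded, injective with closed range, `T†` its
Moore–Penrose inverse (`T† T = id`, `T T† = P_{R(T)}`), and `G : K → K` is firmly
nonexpansive, then `T† G T` is firmly nonexpansive with respect to the inner product
`⟪x, y⟫_T = ⟪T x, T y⟫` on `H`. -/
theorem stmt1
    {H K : Type*} [NormedAddCommGroup H] [InnerProductSpace ℝ H] [CompleteSpace H]
    [NormedAddCommGroup K] [InnerProductSpace ℝ K] [CompleteSpace K]
    (T : H →L[ℝ] K) (hinj : Function.Injective T)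
    (hrange : IsClosed (Set.range T))
    (Tdag : K →L[ℝ] H)
    (hid : ∀ x : H, Tdag (T x) = x)
    (hproj : ∀ z : K, ∀ x : H, ⟪z - T (Tdag z), T x⟫ = 0)
    (G : K → K)
    (hG : ∀ u v : K, ‖G u - G v‖ ^ 2 ≤ ⟪u - v, G u - G v⟫) :
    ∀ x y : H,
      ‖T (Tdag (G (T x))) - T (Tdag (G (T y)))‖ ^ 2
        ≤ ⟪T x - T y, T (Tdag (G (T x))) - T (Tdag (G (T y)))⟫ :=
  stmt1_general T Tdag hproj G hG
end

section
/- Let H be a real Hilbert space and Φ : H → ℝ a Fréchet differentiable function such that its gradient ∇Φ is nonexpansive and the gradient of a convex function (i.e., Φ is convex and ∇Φ is 1-Lipschitz). Then ∇Φ is firmly nonexpansive. -/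
/-! Convexity gives the lower bound `f x + ⟪∇f x, z - x⟫ ≤ f z`, and an `L`-Lipschitz gradient the
upper bound `f z ≤ f x + ⟪∇f x, z - x⟫ + L/2 ‖z - x‖²` (the derivative of `f` along the segment
grows at rate at most `L‖z - x‖²`). Applying the lower bound at the gradient step
`w = z - (∇f z - ∇f x)/L` and the upper bound from `z` to `w` sharpens the lower bound to
`f x + ⟪∇f x, z - x⟫ + ‖∇f z - ∇f x‖²/(2L) ≤ f z`; adding this to its copy with `x` and `z`
exchanged gives `‖∇f x - ∇f y‖² ≤ L ⟪x - y, ∇f x - ∇f y⟫`, which for `L = 1` is firm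
nonexpansiveness. -/

open scoped RealInnerProductSpace NNReal Gradient
open AffineMap Set

section

variable {H : Type*} [NormedAddCommGroup H] [InnerProductSpace ℝ H] [CompleteSpace H]
  {f : H → ℝ} {g x z : H} {t : ℝ}

theorem HasGradientAt.hasDerivAt_comp_lineMap (hf : HasGradientAt f g (lineMap x z t)) :
    HasDerivAt (fun s : ℝ ↦ f (lineMap x z s)) ⟪g, z - x⟫ t := by
  have := (hasGradientAt_iff_hasFDerivAt.mp hf).comp_hasDerivAt t
    (hasDerivAt_lineMap (a := x) (b := z) (x := t))
  rwa [InnerProductSpace.toDual_apply_apply] at this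

theorem ConvexOn.add_inner_gradient_le (hconv : ConvexOn ℝ univ f)
    (hf : DifferentiableAt ℝ f x) (z : H) : f x + ⟪∇ f x, z - x⟫ ≤ f z := by
  have hline := hconv.comp_affineMap (lineMap x z : ℝ →ᵃ[ℝ] H)
  rw [preimage_univ] at hline
  have hderiv : HasDerivAt (fun s : ℝ ↦ f (lineMap x z s)) ⟪∇ f x, z - x⟫ 0 :=
    HasGradientAt.hasDerivAt_comp_lineMap (by simpa using hf.hasGradientAt)
  have := hline.le_slope_of_hasDerivAt (mem_univ 0) (mem_univ 1) zero_lt_one hderiv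
  simp only [slope, Function.comp_apply, lineMap_apply_zero, lineMap_apply_one, vsub_eq_sub,
    sub_zero, inv_one, one_smul] at this
  linarith

theorem LipschitzWith.le_add_inner_gradient_add_sq {L : ℝ≥0} (hL : LipschitzWith L (∇ f))
    (hf : Differentiable ℝ f) (x z : H) :
    f z ≤ f x + ⟪∇ f x, z - x⟫ + L / 2 * ‖z - x‖ ^ 2 := by
  set φ : ℝ → ℝ := fun t ↦ f (lineMap x z t) - t * ⟪∇ f x, z - x⟫ - L / 2 * t ^ 2 * ‖z - x‖ ^ 2
  have hφ : ∀ t, HasDerivAt φ (⟪∇ f (lineMap x z t) - ∇ f x, z - x⟫ - L * t * ‖z - x‖ ^ 2) t := by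
    intro t
    refine ((((hf (lineMap x z t)).hasGradientAt.hasDerivAt_comp_lineMap).sub
      ((hasDerivAt_id t).mul_const ⟪∇ f x, z - x⟫)).sub
      (((hasDerivAt_pow 2 t).const_mul (L / 2 : ℝ)).mul_const (‖z - x‖ ^ 2))).congr_deriv ?_
    simp only [inner_sub_left]
    ring
  have hφ_nonpos : ∀ t ∈ interior (Ici (0 : ℝ)),
      ⟪∇ f (lineMap x z t) - ∇ f x, z - x⟫ - L * t * ‖z - x‖ ^ 2 ≤ 0 := by
    intro t ht
    rw [interior_Ici] at ht
    calc ⟪∇ f (lineMap x z t) - ∇ f x, z - x⟫ - L * t * ‖z - x‖ ^ 2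
        ≤ ‖∇ f (lineMap x z t) - ∇ f x‖ * ‖z - x‖ - L * t * ‖z - x‖ ^ 2 := by
          gcongr; exact real_inner_le_norm _ _
      _ ≤ L * ‖lineMap x z t - x‖ * ‖z - x‖ - L * t * ‖z - x‖ ^ 2 := by
          gcongr; simpa [dist_eq_norm] using hL.dist_le_mul (lineMap x z t) x
      _ = 0 := by
          rw [lineMap_apply_module', add_sub_cancel_right, norm_smul, Real.norm_of_nonneg ht.le]
          ring
  have hanti : AntitoneOn φ (Ici 0) :=
    antitoneOn_of_hasDerivWithinAt_nonpos (convex_Ici 0)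
      (fun t _ ↦ (hφ t).continuousAt.continuousWithinAt)
      (fun t _ ↦ (hφ t).hasDerivWithinAt) hφ_nonpos
  have := hanti (mem_Ici.mpr le_rfl) (mem_Ici.mpr zero_le_one) zero_le_one
  simp only [φ, lineMap_apply_zero, lineMap_apply_one] at this
  linarith

theorem ConvexOn.add_inner_gradient_add_sq_le {L : ℝ≥0} (hL₀ : 0 < L)
    (hconv : ConvexOn ℝ univ f) (hf : Differentiable ℝ f) (hL : LipschitzWith L (∇ f)) (x z : H) :
    f x + ⟪∇ f x, z - x⟫ + 1 / (2 * L) * ‖∇ f z - ∇ f x‖ ^ 2 ≤ f z := by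
  set d := ∇ f z - ∇ f x
  set w := z - (L⁻¹ : ℝ) • d
  have hx := hconv.add_inner_gradient_le (hf x) w
  have hz := hL.le_add_inner_gradient_add_sq hf z w
  have hwx : w - x = (z - x) - (L⁻¹ : ℝ) • d := by simp only [w]; abel
  have hwz : w - z = -((L⁻¹ : ℝ) • d) := by simp only [w]; abel
  rw [hwx, inner_sub_right, inner_smul_right] at hx
  rw [hwz, inner_neg_right, inner_smul_right, norm_neg, norm_smul, Real.norm_of_nonneg
    (by positivity)] at hz
  have hd : ⟪∇ f z, d⟫ - ⟪∇ f x, d⟫ = ‖d‖ ^ 2 := by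
    rw [← inner_sub_left, real_inner_self_eq_norm_sq]
  have hL' : (L : ℝ) ≠ 0 := by positivity
  field_simp at hx hz ⊢
  linear_combination 2 * hx + hz - 2 * hd

theorem ConvexOn.norm_gradient_sub_sq_le_mul_inner {L : ℝ≥0} (hconv : ConvexOn ℝ univ f)
    (hf : Differentiable ℝ f) (hL : LipschitzWith L (∇ f)) (x y : H) :
    ‖∇ f x - ∇ f y‖ ^ 2 ≤ L * ⟪x - y, ∇ f x - ∇ f y⟫ := by
  rcases eq_zero_or_pos L with rfl | hL₀
  · have hconst := hL.dist_le_mul x y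
    rw [NNReal.coe_zero, zero_mul, dist_le_zero] at hconst
    simp [hconst]
  have hxy := hconv.add_inner_gradient_add_sq_le hL₀ hf hL x y
  have hyx := hconv.add_inner_gradient_add_sq_le hL₀ hf hL y x
  rw [norm_sub_rev] at hxy
  have hinner : ⟪∇ f x, y - x⟫ + ⟪∇ f y, x - y⟫ = -⟪x - y, ∇ f x - ∇ f y⟫ := by
    simp only [inner_sub_left, inner_sub_right, real_inner_comm x, real_inner_comm y]
    ring
  have hL' : (L : ℝ) ≠ 0 := by positivity
  field_simp at hxy hyx
  linear_combination (hxy + hyx) / 2 - (L : ℝ) * hinner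

end

/-- Baillon–Haddad type: If `Φ : H → ℝ` is Fréchet differentiable and
convex on a real Hilbert space and its gradient `∇Φ` is nonexpansive, then `∇Φ` is
firmly nonexpansive. -/
theorem stmt3
    {H : Type*} [NormedAddCommGroup H] [InnerProductSpace ℝ H] [CompleteSpace H]
    (Φ : H → ℝ) (hdiff : Differentiable ℝ Φ) (hconv : ConvexOn ℝ Set.univ Φ)
    (hne : ∀ x y : H, ‖gradient Φ x - gradient Φ y‖ ≤ ‖x - y‖) :
    ∀ x y : H, ‖gradient Φ x - gradient Φ y‖ ^ 2 ≤ ⟪x - y, gradient Φ x - gradient Φ y⟫ := by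
  have hL : LipschitzWith 1 (∇ Φ) :=
    LipschitzWith.mk_one fun x y ↦ by simpa only [dist_eq_norm] using hne x y
  intro x y
  simpa using hconv.norm_gradient_sub_sq_le_mul_inner hdiff hL x y
end

section
/- Let T : H → K be a bounded injective linear operator with closed range and g ∈ Γ₀(K). Then for every x ∈ H, T† prox_g(Tx) = argmin_{y ∈ H} { ½‖x − y‖_T² + f(y) }, where ‖·‖_T := ‖T·‖_K and f(x) := (g □ (½‖·‖_K² + ι_{N(T*)}))(Tx), with □ denoting infimal convolution and ι_{N(T*)} the indicator function of the kernel of T*. In particular, T† prox_g T is the proximity operator of f on H equipped with the norm ‖·‖_T. -/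
/-!
Write `w₀ = prox_g (T x)` and `y₀ = T† w₀`, so that `T y₀` is the orthogonal projection of `w₀`
onto `R(T)`. A pair `(y, w)` with `T* (T y - w) = 0` is exactly a decomposition of `T y` admissible
in the infimal convolution defining `f y`, and for such a pair Pythagoras gives
`½‖T x - T y‖² + g w + ½‖T y - w‖² = ½‖T x - w‖² + g w`. Minimizing over all admissible pairs
therefore recovers the prox objective of `g` at `T x`, whose minimizer `w₀` belongs to the
admissible pair `(y₀, w₀)`. Strict uniqueness comes from the quadratic growth
`½‖T x - w‖² + g w ≥ ½‖T x - w₀‖² + g w₀ + ¼‖w - w₀‖²` of the strongly convex prox objective: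
since `(y - y₀, w - w₀)` is again admissible, `‖w - w₀‖ ≥ ‖T y - T y₀‖ > 0` for `y ≠ y₀`.
-/

open scoped RealInnerProductSpace

theorem ConvexOn.prox_objective_add_quarter_sq_le {E : Type*} [NormedAddCommGroup E]
    [InnerProductSpace ℝ E] {g : E → ℝ} (hg : ConvexOn ℝ Set.univ g) {z p : E}
    (hp : ∀ w, (1 / 2) * ‖z - p‖ ^ 2 + g p ≤ (1 / 2) * ‖z - w‖ ^ 2 + g w) (w : E) :
    (1 / 2) * ‖z - p‖ ^ 2 + g p + (1 / 4) * ‖w - p‖ ^ 2 ≤ (1 / 2) * ‖z - w‖ ^ 2 + g w := by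
  set m : E := (1 / 2 : ℝ) • w + (1 / 2 : ℝ) • p
  have hconv : g m ≤ (1 / 2) * g w + (1 / 2) * g p :=
    hg.2 (Set.mem_univ w) (Set.mem_univ p) (by norm_num : (0 : ℝ) ≤ 1 / 2)
      (by norm_num : (0 : ℝ) ≤ 1 / 2) (by norm_num)
  have hmid :
      ‖z - m‖ ^ 2 = (1 / 2) * ‖z - w‖ ^ 2 + (1 / 2) * ‖z - p‖ ^ 2 - (1 / 4) * ‖w - p‖ ^ 2 := by
    have hpar := parallelogram_law_with_norm ℝ (z - w) (z - p)
    rw [show (z - w) - (z - p) = -(w - p) by abel, norm_neg] at hpar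
    rw [show z - m = (1 / 2 : ℝ) • ((z - w) + (z - p)) by module, norm_smul,
      Real.norm_of_nonneg (by norm_num)]
    linear_combination (1 / 4 : ℝ) * hpar
  linarith [hp m]

namespace ContinuousLinearMap

variable {H K : Type*} [NormedAddCommGroup H] [InnerProductSpace ℝ H] [CompleteSpace H]
  [NormedAddCommGroup K] [InnerProductSpace ℝ K] [CompleteSpace K] (T : H →L[ℝ] K)

theorem adjoint_apply_eq_zero_iff {u : K} : adjoint T u = 0 ↔ ∀ x, ⟪u, T x⟫ = 0 := by
  refine ⟨fun h x ↦ by rw [← adjoint_inner_left, h, inner_zero_left], fun h ↦ ?_⟩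
  rw [← inner_self_eq_zero (𝕜 := ℝ), adjoint_inner_left]
  exact h _

variable {T}

theorem norm_sub_sq_eq_of_adjoint_apply_sub_eq_zero {y : H} {w : K}
    (h : adjoint T (T y - w) = 0) (x : H) :
    ‖T x - w‖ ^ 2 = ‖T x - T y‖ ^ 2 + ‖T y - w‖ ^ 2 := by
  have horth : ⟪T x - T y, T y - w⟫ = 0 := by
    rw [real_inner_comm, ← map_sub]
    exact (adjoint_apply_eq_zero_iff T).1 h _
  rw [← sub_add_sub_cancel, sq, sq, sq, norm_add_sq_eq_norm_sq_add_norm_sq_real horth]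

theorem norm_apply_sq_le_of_adjoint_apply_sub_eq_zero {y : H} {w : K}
    (h : adjoint T (T y - w) = 0) : ‖T y‖ ^ 2 ≤ ‖w‖ ^ 2 := by
  have := norm_sub_sq_eq_of_adjoint_apply_sub_eq_zero h 0
  simp only [map_zero, zero_sub, norm_neg] at this
  linarith [sq_nonneg ‖T y - w‖]

theorem prox_objective_add_quarter_sq_le_of_adjoint_apply_sub_eq_zero {g : K → ℝ}
    (hg : ConvexOn ℝ Set.univ g) {x y₀ : H} {w₀ : K}
    (hmin : ∀ w, (1 / 2) * ‖T x - w₀‖ ^ 2 + g w₀ ≤ (1 / 2) * ‖T x - w‖ ^ 2 + g w)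
    (h₀ : adjoint T (T y₀ - w₀) = 0) {y : H} {w : K} (h : adjoint T (T y - w) = 0) :
    (1 / 2) * ‖T x - w₀‖ ^ 2 + g w₀ + (1 / 4) * ‖T y - T y₀‖ ^ 2
      ≤ (1 / 2) * ‖T x - T y‖ ^ 2 + (g w + (1 / 2) * ‖T y - w‖ ^ 2) := by
  have hgrowth := hg.prox_objective_add_quarter_sq_le hmin w
  have hpyth := norm_sub_sq_eq_of_adjoint_apply_sub_eq_zero h x
  have hsub : adjoint T (T (y - y₀) - (w - w₀)) = 0 := by
    rw [T.map_sub, sub_sub_sub_comm, map_sub, h, h₀, sub_zero]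
  have hcontract := norm_apply_sq_le_of_adjoint_apply_sub_eq_zero hsub
  rw [map_sub] at hcontract
  linarith

theorem prox_objective_add_quarter_sq_le_add_iInf {g : K → ℝ} (hg : ConvexOn ℝ Set.univ g)
    {x y₀ : H} {w₀ : K}
    (hmin : ∀ w, (1 / 2) * ‖T x - w₀‖ ^ 2 + g w₀ ≤ (1 / 2) * ‖T x - w‖ ^ 2 + g w)
    (h₀ : adjoint T (T y₀ - w₀) = 0) (y : H) :
    (1 / 2) * ‖T x - w₀‖ ^ 2 + g w₀ + (1 / 4) * ‖T y - T y₀‖ ^ 2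
      ≤ (1 / 2) * ‖T x - T y‖ ^ 2
        + ⨅ w : {w : K // adjoint T (T y - w) = 0}, (g w + (1 / 2) * ‖T y - (w : K)‖ ^ 2) := by
  have : Nonempty {w : K // adjoint T (T y - w) = 0} := ⟨⟨T y, by simp⟩⟩
  rw [← sub_le_iff_le_add']
  exact le_ciInf fun w ↦ sub_le_iff_le_add'.2 <|
    prox_objective_add_quarter_sq_le_of_adjoint_apply_sub_eq_zero hg hmin h₀ w.2

theorem add_iInf_le_prox_objective {g : K → ℝ} (hg : ConvexOn ℝ Set.univ g) {x y₀ : H} {w₀ : K}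
    (hmin : ∀ w, (1 / 2) * ‖T x - w₀‖ ^ 2 + g w₀ ≤ (1 / 2) * ‖T x - w‖ ^ 2 + g w)
    (h₀ : adjoint T (T y₀ - w₀) = 0) :
    (1 / 2) * ‖T x - T y₀‖ ^ 2
        + ⨅ w : {w : K // adjoint T (T y₀ - w) = 0}, (g w + (1 / 2) * ‖T y₀ - (w : K)‖ ^ 2)
      ≤ (1 / 2) * ‖T x - w₀‖ ^ 2 + g w₀ := by
  have hbdd : BddBelow (Set.range fun w : {w : K // adjoint T (T y₀ - w) = 0} ↦
      g w + (1 / 2) * ‖T y₀ - (w : K)‖ ^ 2) := by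
    refine ⟨(1 / 2) * ‖T x - w₀‖ ^ 2 + g w₀ - (1 / 2) * ‖T x - T y₀‖ ^ 2, ?_⟩
    rintro _ ⟨⟨w, hw⟩, rfl⟩
    linarith [prox_objective_add_quarter_sq_le_of_adjoint_apply_sub_eq_zero hg hmin h₀ hw,
      sq_nonneg ‖T y₀ - T y₀‖]
  rw [norm_sub_sq_eq_of_adjoint_apply_sub_eq_zero h₀ x]
  linarith [ciInf_le hbdd ⟨w₀, h₀⟩]

end ContinuousLinearMap

theorem stmt8_general
    {H K : Type*} [NormedAddCommGroup H] [InnerProductSpace ℝ H] [CompleteSpace H]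
    [NormedAddCommGroup K] [InnerProductSpace ℝ K] [CompleteSpace K]
    (T : H →L[ℝ] K) (hinj : Function.Injective T)
    (Tdag : K →L[ℝ] H)
    (hproj : ∀ z : K, ∀ x : H, ⟪z - T (Tdag z), T x⟫ = 0)
    (g : K → ℝ) (hgconv : ConvexOn ℝ Set.univ g)
    (proxg : K → K)
    (hproxg : ∀ z w : K, w ≠ proxg z →
      (1 / 2) * ‖z - proxg z‖ ^ 2 + g (proxg z) < (1 / 2) * ‖z - w‖ ^ 2 + g w)
    (f : H → ℝ)
    (hf : ∀ x : H, f x =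
      ⨅ w : {w : K // ContinuousLinearMap.adjoint T (T x - w) = 0},
        (g w + (1 / 2) * ‖T x - (w : K)‖ ^ 2)) :
    ∀ x y : H, y ≠ Tdag (proxg (T x)) →
      (1 / 2) * ‖T x - T (Tdag (proxg (T x)))‖ ^ 2 + f (Tdag (proxg (T x)))
        < (1 / 2) * ‖T x - T y‖ ^ 2 + f y := by
  intro x y hy
  set w₀ := proxg (T x)
  set y₀ := Tdag w₀
  have hmin : ∀ w, (1 / 2) * ‖T x - w₀‖ ^ 2 + g w₀ ≤ (1 / 2) * ‖T x - w‖ ^ 2 + g w := fun w ↦ by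
    rcases eq_or_ne w w₀ with rfl | hw
    exacts [le_rfl, (hproxg _ w hw).le]
  have h₀ : ContinuousLinearMap.adjoint T (T y₀ - w₀) = 0 :=
    T.adjoint_apply_eq_zero_iff.2 fun v ↦ by rw [← neg_sub, inner_neg_left, hproj, neg_zero]
  have hlower := T.prox_objective_add_quarter_sq_le_add_iInf hgconv hmin h₀ y
  have hupper := T.add_iInf_le_prox_objective hgconv hmin h₀
  rw [← hf] at hlower hupper
  have hpos : 0 < ‖T y - T y₀‖ := norm_sub_pos_iff.2 (hinj.ne hy)
  nlinarith

/-- Let `T : H → K` be bounded, injective with closed range, `T†` its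
Moore–Penrose inverse, and `g ∈ Γ₀(K)` (convex, lower semicontinuous, real-valued)
with proximity operator `prox_g`. Then `T† (prox_g (T x))` is the unique minimizer of
`y ↦ ½‖x − y‖_T² + f(y)` where `‖u‖_T = ‖T u‖` and
`f(x) = (g □ (½‖·‖² + ι_{N(T*)}))(T x)`, the infimal convolution being taken over the
decompositions `T x = w + n` with `n ∈ N(T*)`. Thus `T† prox_g T` is the proximity
operator of `f` on `(H, ‖·‖_T)`. -/
theorem stmt8
    {H K : Type*} [NormedAddCommGroup H] [InnerProductSpace ℝ H] [CompleteSpace H]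
    [NormedAddCommGroup K] [InnerProductSpace ℝ K] [CompleteSpace K]
    (T : H →L[ℝ] K) (hinj : Function.Injective T)
    (hrange : IsClosed (Set.range T))
    (Tdag : K →L[ℝ] H)
    (hid : ∀ x : H, Tdag (T x) = x)
    (hproj : ∀ z : K, ∀ x : H, ⟪z - T (Tdag z), T x⟫ = 0)
    (g : K → ℝ) (hgconv : ConvexOn ℝ Set.univ g) (hglsc : LowerSemicontinuous g)
    (proxg : K → K)
    (hproxg : ∀ z w : K, w ≠ proxg z →
      (1 / 2) * ‖z - proxg z‖ ^ 2 + g (proxg z) < (1 / 2) * ‖z - w‖ ^ 2 + g w)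
    (f : H → ℝ)
    (hf : ∀ x : H, f x =
      ⨅ w : {w : K // ContinuousLinearMap.adjoint T (T x - w) = 0},
        (g w + (1 / 2) * ‖T x - (w : K)‖ ^ 2)) :
    ∀ x y : H, y ≠ Tdag (proxg (T x)) →
      (1 / 2) * ‖T x - T (Tdag (proxg (T x)))‖ ^ 2 + f (Tdag (proxg (T x)))
        < (1 / 2) * ‖T x - T y‖ ^ 2 + f y :=
  stmt8_general T hinj Tdag hproj g hgconv proxg hproxg f hf
end
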